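/- For all sufficiently large n, any nontrivial symmetric Boolean function f:{0,1}^n→{0,1} has at least C(n, ⌈n/8⌉) nonzero Fourier coefficients, i.e., |{w ∈ {0,1}^n : f̃(w) ≠ 0}| ≥ C(n, ⌈n/8⌉). -/

import Mathlib

/-!
The Fourier coefficient of a symmetric `f` at `w` depends only on `k = |w|`, so its support is a
union of weight classes of size `C(n, k)`, and `C(n, k) ≥ C(n, D)` whenever `D ≤ k ≤ n - D`.
If instead every coefficient of weight in `[D, n - D]` vanishes, Fourier inversion writes `f(x)`
through the Krawtchouk sums `K_k(x) = Σ_{|w| = k} (-1)^{x·w}`. These are polynomials of degree `k`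
in `m = |x|` (the coefficient of `X^k` in `(1 - X)^m (1 + X)^(n - m)`), and complementing `w` gives
`K_{n-k} = (-1)^m K_k`. Hence `f(x) = P(m) + (-1)^m Q(m)` with `deg P, deg Q < D`. On even `m` the
polynomial `P + Q`, on odd `m` the polynomial `P - Q`, takes only the values `0` and `1` at more
than twice its degree many points, so it is constant, and `f` is constant or a parity function.
For `D = ⌈n/8⌉` the point count `4D ≤ n + 3` holds for every `n ≥ 1`.
-/

namespace SymXOR

/-- Hamming weight of a Boolean vector. -/
def hammingWeight {n : ℕ} (x : Fin n → Bool) : ℕ :=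
  (Finset.univ.filter fun i => x i = true).card

/-- The inner product `x·w = Σ_i x_i w_i` of two Boolean vectors. -/
def dotProd {n : ℕ} (x w : Fin n → Bool) : ℕ :=
  (Finset.univ.filter fun i => x i = true ∧ w i = true).card

/-- A Boolean value viewed as a real number. -/
noncomputable def boolToReal (b : Bool) : ℝ := if b then 1 else 0

/-- The Fourier coefficient `f̃(w) = 2^{-n} Σ_x (-1)^{x·w} f(x)`. -/
noncomputable def fourierCoeff {n : ℕ} (f : (Fin n → Bool) → Bool) (w : Fin n → Bool) : ℝ :=
  (1 / 2 ^ n) * ∑ x : Fin n → Bool, (-1 : ℝ) ^ dotProd x w * boolToReal (f x)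

open Finset Polynomial

theorem coeff_one_sub_X_pow {R : Type*} [CommRing R] (m i : ℕ) :
    ((1 - X : R[X]) ^ m).coeff i = (-1) ^ i * m.choose i := by
  have h : (1 - X : R[X]) ^ m = ∑ j ∈ range (m + 1), C ((-1 : R) ^ j * m.choose j) * X ^ j := by
    rw [sub_eq_add_neg, add_comm, add_pow]
    refine sum_congr rfl fun j _ => ?_
    simp only [neg_pow (X : R[X]), one_pow, mul_one, C_mul, C_pow, C_neg, C_1, ← C_eq_natCast]
    ring
  rw [h, finsetSum_coeff]
  simp only [coeff_C_mul_X_pow, sum_ite_eq, mem_range, ite_eq_left_iff, not_lt]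
  intro hi
  rw [Nat.choose_eq_zero_of_lt (by omega), Nat.cast_zero, mul_zero]

theorem pow_card_filter {M ι : Type*} [CommMonoid M] [Fintype ι] (a : M) (p : ι → Prop)
    [DecidablePred p] : a ^ #(univ.filter p) = ∏ i, if p i then a else 1 := by
  rw [← prod_const, prod_filter]

theorem eq_zero_or_eq_one_of_forall_eval {R : Type*} [CommRing R] [IsDomain R] {p : R[X]}
    {ι : Type*} [Fintype ι] {g : ι → R} (hg : Function.Injective g)
    (h : ∀ i, p.eval (g i) = 0 ∨ p.eval (g i) = 1) (hcard : 2 * p.natDegree < Fintype.card ι) :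
    p = 0 ∨ p = 1 := by
  have hdeg : (p * (p - 1)).natDegree < Fintype.card ι := by
    refine natDegree_mul_le.trans_lt (lt_of_le_of_lt ?_ hcard)
    have : (p - 1).natDegree ≤ p.natDegree := (natDegree_sub_le _ _).trans (by simp)
    omega
  have hzero : p * (p - 1) = 0 :=
    eq_zero_of_natDegree_lt_card_of_eval_eq_zero _ hg
      (fun i => by rcases h i with h | h <;> simp [h]) hdeg
  exact (mul_eq_zero.mp hzero).imp_right sub_eq_zero.mp

theorem Nat.choose_le_choose_of_le_of_le_half {n a b : ℕ} (hab : a ≤ b) (hb : b ≤ n / 2) :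
    n.choose a ≤ n.choose b := by
  induction b, hab using Nat.le_induction with
  | base => rfl
  | succ b _ ih => exact (ih (by omega)).trans (Nat.choose_le_succ_of_lt_half_left (by omega))

theorem Nat.choose_le_choose_of_le_of_add_le {n a b : ℕ} (hab : a ≤ b) (hb : b + a ≤ n) :
    n.choose a ≤ n.choose b := by
  rcases le_or_gt b (n / 2) with h | h
  · exact choose_le_choose_of_le_of_le_half hab h
  · rw [← Nat.choose_symm (show b ≤ n by omega)]
    exact choose_le_choose_of_le_of_le_half (by omega) (by omega)

theorem sum_range_succ_eq_sum_range_add_reflect {M : Type*} [AddCommMonoid M] {n D : ℕ}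
    (g : ℕ → M) (hD : 2 * D ≤ n + 1) (hg : ∀ k, D ≤ k → k + D ≤ n → g k = 0) :
    ∑ k ∈ range (n + 1), g k = ∑ j ∈ range D, (g j + g (n - j)) := by
  rw [sum_add_distrib, ← sum_range_add_sum_Ico _ (show D ≤ n + 1 by omega),
    ← sum_Ico_consecutive _ (show D ≤ n + 1 - D by omega) (show n + 1 - D ≤ n + 1 by omega),
    sum_eq_zero fun k hk => hg k (mem_Ico.mp hk).1 (by have := (mem_Ico.mp hk).2; omega),
    zero_add, sum_Ico_eq_sum_range, show n + 1 - (n + 1 - D) = D by omega,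
    ← sum_range_reflect (fun j => g (n - j)) D]
  exact congrArg _ (sum_congr rfl fun j hj => congrArg g (by have := mem_range.mp hj; omega))

section

variable {K : Type*} [Field K]

variable (K) in
noncomputable def choosePoly (j : ℕ) : K[X] := C (j.factorial : K)⁻¹ * descPochhammer K j

theorem natDegree_choosePoly_le (j : ℕ) : (choosePoly K j).natDegree ≤ j :=
  (natDegree_C_mul_le _ _).trans (descPochhammer_natDegree K j).le

theorem eval_choosePoly [CharZero K] (j m : ℕ) : (choosePoly K j).eval (m : K) = m.choose j := by
  rw [choosePoly, eval_C_mul, descPochhammer_eval_eq_descFactorial,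
    Nat.descFactorial_eq_factorial_mul_choose, Nat.cast_mul,
    inv_mul_cancel_left₀ (Nat.cast_ne_zero.mpr j.factorial_ne_zero)]

variable (K) in
noncomputable def krawtchoukPoly (n k : ℕ) : K[X] :=
  ∑ p ∈ antidiagonal k, C ((-1) ^ p.1) * choosePoly K p.1 * (choosePoly K p.2).comp (C (n : K) - X)

theorem natDegree_krawtchoukPoly_le (n k : ℕ) : (krawtchoukPoly K n k).natDegree ≤ k := by
  refine natDegree_sum_le_of_forall_le _ _ fun p hp => ?_
  rw [← mem_antidiagonal.mp hp]
  refine natDegree_mul_le_of_le ((natDegree_C_mul_le _ _).trans (natDegree_choosePoly_le _)) ?_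
  calc _ ≤ p.2 * 1 := natDegree_comp_le.trans <| Nat.mul_le_mul (natDegree_choosePoly_le _)
          ((natDegree_sub_le _ _).trans (by simp))
    _ = p.2 := mul_one _

theorem eval_krawtchoukPoly [CharZero K] {n m : ℕ} (hm : m ≤ n) (k : ℕ) :
    (krawtchoukPoly K n k).eval (m : K) = ((1 - X : K[X]) ^ m * (1 + X) ^ (n - m)).coeff k := by
  rw [krawtchoukPoly, eval_finsetSum, coeff_mul]
  refine sum_congr rfl fun p _ => ?_
  rw [coeff_one_sub_X_pow, coeff_one_add_X_pow, eval_mul, eval_mul, eval_C, eval_comp, eval_sub,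
    eval_C, eval_X, ← Nat.cast_sub hm, eval_choosePoly, eval_choosePoly]

end

theorem boolToReal_injective : Function.Injective boolToReal := by
  intro a b h
  cases a <;> cases b <;> simp_all [boolToReal]

theorem boolToReal_eq_zero_or_eq_one (b : Bool) : boolToReal b = 0 ∨ boolToReal b = 1 := by
  cases b <;> simp [boolToReal]

variable {n : ℕ}

def IsSymmetric (f : (Fin n → Bool) → Bool) : Prop :=
  ∀ x y, hammingWeight x = hammingWeight y → f x = f y

variable {f : (Fin n → Bool) → Bool}

theorem hammingWeight_le (x : Fin n → Bool) : hammingWeight x ≤ n :=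
  (card_filter_le _ _).trans_eq (by simp)

theorem dotProd_comm (x w : Fin n → Bool) : dotProd x w = dotProd w x := by
  simp only [dotProd, and_comm]

theorem dotProd_add_dotProd_not (x w : Fin n → Bool) :
    dotProd x w + dotProd x (fun i => !w i) = hammingWeight x := by
  simpa [dotProd, hammingWeight, filter_filter] using
    card_filter_add_card_filter_not (s := univ.filter (x · = true)) (w · = true)

theorem hammingWeight_not (w : Fin n → Bool) :
    hammingWeight (fun i => !w i) = n - hammingWeight w := by
  have := card_filter_add_card_filter_not (s := (univ : Finset (Fin n))) (w · = true)
  simp only [card_univ, Fintype.card_fin, Bool.not_eq_true] at this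
  simp only [hammingWeight, Bool.not_eq_eq_eq_not, Bool.not_true]
  omega

def firstOnes (n m : ℕ) : Fin n → Bool := fun i => decide ((i : ℕ) < m)

theorem hammingWeight_firstOnes {m : ℕ} (hm : m ≤ n) : hammingWeight (firstOnes n m) = m := by
  simp [hammingWeight, firstOnes, Fin.card_filter_val_lt, hm]

theorem sum_eq_sum_range_sum_filter_hammingWeight {M : Type*} [AddCommMonoid M]
    (g : (Fin n → Bool) → M) :
    ∑ x, g x = ∑ m ∈ range (n + 1), ∑ x ∈ univ.filter (hammingWeight · = m), g x :=
  (sum_fiberwise_of_maps_to (fun x _ => mem_range.mpr (Nat.lt_succ_of_le (hammingWeight_le x)))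
    g).symm

theorem sum_neg_one_pow_dotProd_mul_X_pow {R : Type*} [CommRing R] (x : Fin n → Bool) :
    ∑ w, (-1 : R[X]) ^ dotProd x w * X ^ hammingWeight w
      = (1 - X) ^ hammingWeight x * (1 + X) ^ (n - hammingWeight x) := by
  rw [← hammingWeight_not, hammingWeight, hammingWeight, pow_card_filter, pow_card_filter,
    ← prod_mul_distrib]
  simp only [dotProd, hammingWeight, pow_card_filter, ← prod_mul_distrib]
  rw [← Fintype.prod_sum fun i b =>
    (if x i = true ∧ b = true then (-1 : R[X]) else 1) * if b = true then X else 1]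
  refine prod_congr rfl fun i _ => ?_
  cases x i <;> simp <;> ring

theorem sum_filter_hammingWeight_eq_coeff {R : Type*} [CommRing R] (x : Fin n → Bool) (k : ℕ) :
    ∑ w ∈ univ.filter (hammingWeight · = k), (-1 : R) ^ dotProd x w
      = ((1 - X : R[X]) ^ hammingWeight x * (1 + X) ^ (n - hammingWeight x)).coeff k := by
  rw [← sum_neg_one_pow_dotProd_mul_X_pow, finsetSum_coeff, sum_filter]
  refine sum_congr rfl fun w _ => ?_
  simp only [← C_1, ← C_neg, ← C_pow, coeff_C_mul_X_pow, @eq_comm _ k]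

theorem card_filter_hammingWeight_eq (k : ℕ) :
    #(univ.filter fun w : Fin n → Bool => hammingWeight w = k) = n.choose k := by
  have := sum_filter_hammingWeight_eq_coeff (R := ℤ) (fun _ : Fin n => false) k
  simp [dotProd, hammingWeight, coeff_one_add_X_pow] at this
  exact_mod_cast this

theorem sum_filter_hammingWeight_eq_eval_krawtchoukPoly {K : Type*} [Field K] [CharZero K]
    (x : Fin n → Bool) (k : ℕ) :
    ∑ w ∈ univ.filter (hammingWeight · = k), (-1 : K) ^ dotProd x w
      = (krawtchoukPoly K n k).eval (hammingWeight x : K) := by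
  rw [sum_filter_hammingWeight_eq_coeff, eval_krawtchoukPoly (hammingWeight_le x)]

theorem sum_filter_hammingWeight_eq_sub {R : Type*} [CommRing R] (x : Fin n → Bool) {k : ℕ}
    (hk : k ≤ n) :
    ∑ w ∈ univ.filter (hammingWeight · = n - k), (-1 : R) ^ dotProd x w
      = (-1) ^ hammingWeight x *
          ∑ w ∈ univ.filter (hammingWeight · = k), (-1 : R) ^ dotProd x w := by
  rw [mul_sum]
  refine sum_nbij' (fun w i => !w i) (fun w i => !w i) (fun w hw => ?_) (fun w hw => ?_)
    (fun w _ => by simp) (fun w _ => by simp) (fun w _ => ?_)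
  · simp only [mem_filter, mem_univ, true_and] at hw ⊢
    rw [hammingWeight_not, hw]; omega
  · simp only [mem_filter, mem_univ, true_and] at hw ⊢
    rw [hammingWeight_not, hw]
  · rw [← dotProd_add_dotProd_not x w, pow_add, mul_assoc, ← pow_add, Even.neg_one_pow ⟨_, rfl⟩,
      mul_one]

theorem sum_neg_one_pow_dotProd_mul_neg_one_pow_dotProd {R : Type*} [CommRing R]
    (x y : Fin n → Bool) :
    ∑ w, (-1 : R) ^ dotProd x w * (-1) ^ dotProd y w = if x = y then 2 ^ n else 0 := by
  simp only [dotProd, pow_card_filter, ← prod_mul_distrib]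
  rw [← Fintype.prod_sum fun i b =>
    (if x i = true ∧ b = true then (-1 : R) else 1) * if y i = true ∧ b = true then -1 else 1]
  have hfactor : ∀ i, ∑ b : Bool, (if x i = true ∧ b = true then (-1 : R) else 1) *
      (if y i = true ∧ b = true then -1 else 1) = if x i = y i then 2 else 0 := by
    intro i
    cases x i <;> cases y i <;> norm_num
  simp only [hfactor, Fintype.prod_ite_zero, prod_const, card_univ, Fintype.card_fin, funext_iff]

theorem sum_fourierCoeff_mul_neg_one_pow_dotProd (x : Fin n → Bool) :
    ∑ w, fourierCoeff f w * (-1) ^ dotProd x w = boolToReal (f x) := by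
  calc ∑ w, fourierCoeff f w * (-1) ^ dotProd x w
      = 1 / 2 ^ n * ∑ y, boolToReal (f y) * ∑ w, (-1 : ℝ) ^ dotProd y w * (-1) ^ dotProd x w := by
        simp only [fourierCoeff, mul_sum, sum_mul]
        rw [sum_comm]
        exact sum_congr rfl fun _ _ => sum_congr rfl fun _ _ => by ring
    _ = boolToReal (f x) := by
        simp [sum_neg_one_pow_dotProd_mul_neg_one_pow_dotProd]
        field_simp

theorem fourierCoeff_eq_sum_eval_krawtchoukPoly (hf : IsSymmetric f) (w : Fin n → Bool) :
    fourierCoeff f w = 1 / 2 ^ n * ∑ m ∈ range (n + 1),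
      boolToReal (f (firstOnes n m)) * (krawtchoukPoly ℝ n m).eval (hammingWeight w : ℝ) := by
  rw [fourierCoeff, sum_eq_sum_range_sum_filter_hammingWeight]
  refine congrArg _ (sum_congr rfl fun m hm => ?_)
  rw [← sum_filter_hammingWeight_eq_eval_krawtchoukPoly, mul_sum]
  refine sum_congr rfl fun x hx => ?_
  rw [dotProd_comm, mul_comm, hf x (firstOnes n m) (by
    rw [(mem_filter.mp hx).2, hammingWeight_firstOnes (Nat.lt_succ_iff.mp (mem_range.mp hm))])]

theorem fourierCoeff_congr (hf : IsSymmetric f) {w w' : Fin n → Bool}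
    (h : hammingWeight w = hammingWeight w') :
    fourierCoeff f w = fourierCoeff f w' := by
  rw [fourierCoeff_eq_sum_eval_krawtchoukPoly hf, fourierCoeff_eq_sum_eval_krawtchoukPoly hf, h]

theorem choose_hammingWeight_le_ncard_fourierSupport (hf : IsSymmetric f) {w : Fin n → Bool}
    (hw : fourierCoeff f w ≠ 0) :
    n.choose (hammingWeight w) ≤ {v | fourierCoeff f v ≠ 0}.ncard := by
  rw [← card_filter_hammingWeight_eq, ← Set.ncard_coe_finset]
  refine Set.ncard_le_ncard (fun v hv => ?_) (Set.toFinite _)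
  show fourierCoeff f v ≠ 0
  rwa [fourierCoeff_congr hf (mem_filter.mp (mem_coe.mp hv)).2]

theorem exists_eval_add_neg_one_pow_mul_eval (hf : IsSymmetric f) {D : ℕ} (hD0 : 0 < D)
    (hD : 2 * D ≤ n + 1)
    (hmid : ∀ w, D ≤ hammingWeight w → hammingWeight w + D ≤ n → fourierCoeff f w = 0) :
    ∃ P Q : ℝ[X], P.natDegree < D ∧ Q.natDegree < D ∧ ∀ x, boolToReal (f x) =
      P.eval (hammingWeight x : ℝ) + (-1) ^ hammingWeight x * Q.eval (hammingWeight x : ℝ) := by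
  set φ : ℕ → ℝ := fun k => fourierCoeff f (firstOnes n k)
  have hdeg : ∀ c : ℕ → ℝ, (∑ j ∈ range D, C (c j) * krawtchoukPoly ℝ n j).natDegree < D :=
    fun c => Nat.lt_of_le_pred hD0 <| natDegree_sum_le_of_forall_le _ _ fun j hj =>
      (natDegree_C_mul_le _ _).trans <| (natDegree_krawtchoukPoly_le n j).trans
        (Nat.le_pred_of_lt (mem_range.mp hj))
  refine ⟨_, _, hdeg φ, hdeg (fun j => φ (n - j)), fun x => ?_⟩
  have hclass : ∀ k ≤ n,
      ∑ w ∈ univ.filter (hammingWeight · = k), fourierCoeff f w * (-1) ^ dotProd x w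
        = φ k * ∑ w ∈ univ.filter (hammingWeight · = k), (-1) ^ dotProd x w := by
    intro k hk
    rw [mul_sum]
    refine sum_congr rfl fun w hw => ?_
    rw [fourierCoeff_congr hf ((mem_filter.mp hw).2.trans (hammingWeight_firstOnes hk).symm)]
  rw [← sum_fourierCoeff_mul_neg_one_pow_dotProd x, sum_eq_sum_range_sum_filter_hammingWeight,
    sum_range_succ_eq_sum_range_add_reflect _ hD fun k hlo hhi => sum_eq_zero fun w hw => by
      rw [hmid w ((mem_filter.mp hw).2 ▸ hlo) ((mem_filter.mp hw).2 ▸ hhi), zero_mul],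
    eval_finsetSum, eval_finsetSum, mul_sum, ← sum_add_distrib]
  refine sum_congr rfl fun j hj => ?_
  have hj : j ≤ n := by have := mem_range.mp hj; omega
  rw [hclass j hj, hclass (n - j) (Nat.sub_le n j), sum_filter_hammingWeight_eq_sub x hj,
    sum_filter_hammingWeight_eq_eval_krawtchoukPoly, eval_mul, eval_mul, eval_C, eval_C]
  ring

theorem exists_eq_ite_of_fourierCoeff_eq_zero (hf : IsSymmetric f) {D : ℕ} (hD0 : 0 < D)
    (hD : 4 * D ≤ n + 3)
    (hmid : ∀ w, D ≤ hammingWeight w → hammingWeight w + D ≤ n → fourierCoeff f w = 0) :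
    ∃ a b : Bool, ∀ x, f x = if hammingWeight x % 2 = 0 then a else b := by
  obtain ⟨P, Q, hP, hQ, hPQ⟩ := exists_eval_add_neg_one_pow_mul_eval hf hD0 (by omega) hmid
  have hparity : ∀ r < 2, ∃ c : Bool, ∀ x, hammingWeight x % 2 = r → f x = c := by
    intro r hr
    set R := P + C ((-1) ^ r) * Q
    have hR : ∀ x, hammingWeight x % 2 = r → boolToReal (f x) = R.eval (hammingWeight x : ℝ) := by
      intro x hx
      rw [hPQ, neg_one_pow_eq_pow_mod_two, hx, eval_add, eval_mul, eval_C]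
    have hRdeg : 2 * R.natDegree < (n - r) / 2 + 1 := by
      have : R.natDegree ≤ D - 1 := natDegree_add_le_of_degree_le (Nat.le_pred_of_lt hP)
        ((natDegree_C_mul_le _ _).trans (Nat.le_pred_of_lt hQ))
      omega
    have hR01 : R = 0 ∨ R = 1 := by
      refine eq_zero_or_eq_one_of_forall_eval (ι := Fin ((n - r) / 2 + 1))
        (g := fun t => ((2 * t + r : ℕ) : ℝ)) (fun s t h => Fin.ext (by simp at h; omega))
        (fun t => ?_) (by rwa [Fintype.card_fin])
      have ht : 2 * (t : ℕ) + r ≤ n := by omega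
      rw [← hammingWeight_firstOnes ht, ← hR _ (by rw [hammingWeight_firstOnes ht]; omega)]
      exact boolToReal_eq_zero_or_eq_one _
    obtain ⟨c, hc⟩ : ∃ c : Bool, R = C (boolToReal c) := by
      rcases hR01 with h | h
      exacts [⟨false, by simp [h, boolToReal]⟩, ⟨true, by simp [h, boolToReal]⟩]
    exact ⟨c, fun x hx => boolToReal_injective (by rw [hR x hx, hc, eval_C])⟩
  obtain ⟨a, ha⟩ := hparity 0 two_pos
  obtain ⟨b, hb⟩ := hparity 1 one_lt_two
  exact ⟨a, b, fun x => by split_ifs with h; exacts [ha x h, hb x (by omega)]⟩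

theorem eq_const_or_eq_parity_of_eq_ite {a b : Bool}
    (h : ∀ x, f x = if hammingWeight x % 2 = 0 then a else b) :
    f = (fun _ => false) ∨ f = (fun _ => true) ∨ f = (fun x => decide (hammingWeight x % 2 = 1)) ∨
      f = (fun x => !decide (hammingWeight x % 2 = 1)) := by
  obtain rfl : f = _ := funext h
  have hmod (x : Fin n → Bool) := Nat.mod_two_eq_zero_or_one (hammingWeight x)
  cases a <;> cases b
  · exact Or.inl (funext fun x => by simp)
  · exact Or.inr (Or.inr (Or.inl (funext fun x => by rcases hmod x with h | h <;> simp [h])))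
  · exact Or.inr (Or.inr (Or.inr (funext fun x => by rcases hmod x with h | h <;> simp [h])))
  · exact Or.inr (Or.inl (funext fun x => by simp))

theorem four_mul_ceil_div_eight_le (n : ℕ) : 4 * ⌈(n : ℝ) / 8⌉₊ ≤ n + 3 := by
  have hceil := Nat.ceil_lt_add_one (by positivity : (0 : ℝ) ≤ n / 8)
  have : ((4 * ⌈(n : ℝ) / 8⌉₊ : ℕ) : ℝ) < n + 4 := by
    push_cast
    linarith [(Nat.cast_nonneg n : (0 : ℝ) ≤ n)]
  have : 4 * ⌈(n : ℝ) / 8⌉₊ < n + 4 := by exact_mod_cast this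
  omega

/-- For all sufficiently large `n`, every nontrivial symmetric Boolean
function on `{0,1}^n` has at least `C(n, ⌈n/8⌉)` nonzero Fourier coefficients. -/
theorem fourier_support_lower_bound :
    ∃ N : ℕ, ∀ n : ℕ, N ≤ n → ∀ f : (Fin n → Bool) → Bool,
      (∀ x y, hammingWeight x = hammingWeight y → f x = f y) →
      f ≠ (fun _ => false) →
      f ≠ (fun _ => true) →
      f ≠ (fun x => decide (hammingWeight x % 2 = 1)) →
      f ≠ (fun x => !decide (hammingWeight x % 2 = 1)) →
      n.choose ⌈(n : ℝ) / 8⌉₊ ≤ Set.ncard {w : Fin n → Bool | fourierCoeff f w ≠ 0} := by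
  refine ⟨1, fun n hn f hf h0 h1 hpar hpar' => ?_⟩
  set D := ⌈(n : ℝ) / 8⌉₊
  have hD0 : 0 < D := Nat.ceil_pos.mpr (div_pos (Nat.cast_pos.mpr hn) (by norm_num))
  by_cases hmid : ∃ w, D ≤ hammingWeight w ∧ hammingWeight w + D ≤ n ∧ fourierCoeff f w ≠ 0
  · obtain ⟨w, hlo, hhi, hw⟩ := hmid
    exact (Nat.choose_le_choose_of_le_of_add_le hlo hhi).trans
      (choose_hammingWeight_le_ncard_fourierSupport hf hw)
  · push Not at hmid
    obtain ⟨a, b, hab⟩ :=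
      exists_eq_ite_of_fourierCoeff_eq_zero hf hD0 (four_mul_ceil_div_eight_le n) hmid
    rcases eq_const_or_eq_parity_of_eq_ite hab with h | h | h | h
    exacts [absurd h h0, absurd h h1, absurd h hpar, absurd h hpar']

end SymXOR
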